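/- The set of continuous functions on [0,1] having a permeable graph contains a dense G_δ subset of C[0,1]; in particular, the typical continuous function has a permeable graph. -/

import Mathlib

/-!
On the grid of mesh `1/K`, let `m_i ≤ M_i` be the range of `g` on the `i`-th closed cell. A step
function that equals `y` at the grid points and `y + c_i` on the `i`-th open cell meets the graph of
`g` only at grid points as soon as `y + c_i ∉ [m_i, M_i]`; the cheapest such choice has
`∑ |c_i| ≈ ∑ exitCost m_i M_i y`, and the variation of the step function is at most twice that.
Hence `g` has a permeable graph once these crossing costs are small uniformly in `y`.

Having small crossing cost is an open condition, since the cost moves by at most `K‖g - h‖`. It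
holds for every nonconstant polynomial `p`: a cell pays only if `y` lies strictly inside the range
of `p` on it, so the cell contains a root of `p - y`; each root lies in at most two cells, so at
most `2 deg p` cells pay, each at most the oscillation of `p` over a cell. These polynomials are
dense, and Baire's theorem gives the dense `Gδ`.
-/
open Set
open scoped ENNReal

/-- A continuous map `g : [0,1] → ℝ` has a permeable graph if for every `y` and `δ > 0`
there is `f : [0,1] → ℝ` with `f 0 = f 1 = y`, total variation `< δ`, and such that the
closure of `{t : f t = g t}` is at most countable. -/
def PermeableGraphCM (g : C(Set.Icc (0:ℝ) 1, ℝ)) : Prop :=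
  ∀ y : ℝ, ∀ δ : ℝ, 0 < δ →
    ∃ f : ℝ → ℝ, f 0 = y ∧ f 1 = y ∧
      eVariationOn f (Set.Icc 0 1) < ENNReal.ofReal δ ∧
      (closure {t : ℝ | ∃ h : t ∈ Set.Icc (0:ℝ) 1, f t = g ⟨t, h⟩}).Countable

section Variation

variable {α E : Type*} [LinearOrder α] [SeminormedAddCommGroup E]

theorem eVariationOn_add_le (f g : α → E) (s : Set α) :
    eVariationOn (f + g) s ≤ eVariationOn f s + eVariationOn g s := by
  refine iSup_le fun ⟨n, u, hu, us⟩ => ?_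
  calc ∑ i ∈ Finset.range n, edist ((f + g) (u (i + 1))) ((f + g) (u i))
      ≤ ∑ i ∈ Finset.range n,
          (edist (f (u (i + 1))) (f (u i)) + edist (g (u (i + 1))) (g (u i))) :=
        Finset.sum_le_sum fun i _ => edist_add_add_le _ _ _ _
    _ ≤ eVariationOn f s + eVariationOn g s := by
        rw [Finset.sum_add_distrib]
        exact add_le_add (eVariationOn.sum_le hu us) (eVariationOn.sum_le hu us)

theorem eVariationOn_const (c : E) (s : Set α) : eVariationOn (fun _ => c) s = 0 :=
  eVariationOn.constant_on (subsingleton_singleton.anti (image_subset_iff.2 fun _ _ => rfl))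

theorem eVariationOn_sum_le {ι : Type*} (t : Finset ι) (f : ι → α → E) (s : Set α) :
    eVariationOn (∑ i ∈ t, f i) s ≤ ∑ i ∈ t, eVariationOn (f i) s :=
  Finset.le_sum_of_subadditive (fun F : α → E => eVariationOn F s)
    (eVariationOn_const (0 : E) s).le (fun F G => eVariationOn_add_le F G s) t f

theorem eVariationOn_neg (f : α → E) (s : Set α) : eVariationOn (-f) s = eVariationOn f s := by
  simp only [eVariationOn, Pi.neg_apply, edist_neg_neg]

theorem MonotoneOn.eVariationOn_le_of_mapsTo {f : α → ℝ} {s : Set α} {m M : ℝ}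
    (hf : MonotoneOn f s) (h : MapsTo f s (Icc m M)) :
    eVariationOn f s ≤ ENNReal.ofReal (M - m) := by
  rw [eVariationOn.eq_biSup_inter_Icc]
  refine iSup₂_le fun ab hab => ?_
  rw [hf.eVariationOn_eq hab.1 hab.2.1]
  exact ENNReal.ofReal_le_ofReal (by linarith [(h hab.1).1, (h hab.2.1).2])

theorem IsUpperSet.eVariationOn_indicator_const_le {U : Set α} (hU : IsUpperSet U) (c : ℝ)
    (s : Set α) : eVariationOn (U.indicator fun _ => c) s ≤ ENNReal.ofReal |c| := by
  have key : ∀ c : ℝ, 0 ≤ c → eVariationOn (U.indicator fun _ => c) s ≤ ENNReal.ofReal c := by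
    intro c hc
    have hmono : MonotoneOn (U.indicator fun _ => c) s := fun x _ y _ hxy => by
      by_cases hx : x ∈ U
      · simp [hx, hU hxy hx]
      · simpa [hx] using indicator_nonneg (fun _ _ => hc) y
    simpa using hmono.eVariationOn_le_of_mapsTo (m := 0) (M := c) fun x _ => by
      by_cases hx : x ∈ U <;> simp [hx, hc]
  rcases le_total 0 c with hc | hc
  · simpa [abs_of_nonneg hc] using key c hc
  · rw [abs_of_nonpos hc, ← eVariationOn_neg, ← indicator_neg']
    exact key (-c) (neg_nonneg.2 hc)

theorem eVariationOn_indicator_Ioo_const_le (a b : α) (c : ℝ) (s : Set α) :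
    eVariationOn ((Ioo a b).indicator fun _ => c) s ≤ 2 * ENNReal.ofReal |c| := by
  rcases lt_or_ge a b with hab | hba
  · have hsplit : ((Ioo a b).indicator fun _ => c) =
        (Ioi a).indicator (fun _ => c) + (Ici b).indicator (fun _ => -c) := by
      ext t
      by_cases hb : b ≤ t
      · simp [hb, hab.trans_le hb, not_lt.2 hb]
      · by_cases ha : a < t <;> simp [hb, ha, not_le.1 hb]
    rw [hsplit, two_mul]
    refine (eVariationOn_add_le _ _ s).trans (add_le_add ?_ ?_)
    · exact isUpperSet_Ioi a |>.eVariationOn_indicator_const_le c s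
    · simpa using isUpperSet_Ici b |>.eVariationOn_indicator_const_le (-c) s
  · rw [Ioo_eq_empty (not_lt.2 hba), indicator_empty, eVariationOn_const]
    exact zero_le

end Variation

section StepFunction

variable {α : Type*} [LinearOrder α]

noncomputable def stepOn (x : ℕ → α) (c : ℕ → ℝ) (n : ℕ) : α → ℝ :=
  ∑ i ∈ Finset.range n, (Ioo (x i) (x (i + 1))).indicator fun _ => c i

theorem stepOn_apply (x : ℕ → α) (c : ℕ → ℝ) (n : ℕ) (t : α) :
    stepOn x c n t = ∑ i ∈ Finset.range n, (Ioo (x i) (x (i + 1))).indicator (fun _ => c i) t :=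
  Finset.sum_apply t _ _

theorem eVariationOn_stepOn_le (x : ℕ → α) (c : ℕ → ℝ) (n : ℕ) (s : Set α) :
    eVariationOn (stepOn x c n) s ≤ ENNReal.ofReal (2 * ∑ i ∈ Finset.range n, |c i|) := by
  rw [Finset.mul_sum, ENNReal.ofReal_sum_of_nonneg fun i _ => by positivity]
  refine (eVariationOn_sum_le _ _ s).trans (Finset.sum_le_sum fun i _ => ?_)
  rw [ENNReal.ofReal_mul zero_le_two, ENNReal.ofReal_ofNat]
  exact eVariationOn_indicator_Ioo_const_le _ _ _ s

variable {x : ℕ → α} {c : ℕ → ℝ} {n : ℕ} {t : α}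

theorem stepOn_apply_of_mem_Ioo (hx : Monotone x) {i : ℕ} (hi : i < n)
    (ht : t ∈ Ioo (x i) (x (i + 1))) : stepOn x c n t = c i := by
  rw [stepOn_apply, Finset.sum_eq_single_of_mem i (Finset.mem_range.2 hi)
    fun j _ hji => indicator_of_notMem (fun htj => ?_) _, indicator_of_mem ht]
  simpa using (hx.pairwise_disjoint_on_Ioo_succ hji).ne_of_mem htj ht

theorem stepOn_eq_zero_of_forall_notMem (h : ∀ i < n, t ∉ Ioo (x i) (x (i + 1))) :
    stepOn x c n t = 0 := by
  rw [stepOn_apply]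
  exact Finset.sum_eq_zero fun i hi => indicator_of_notMem (h i (Finset.mem_range.1 hi)) _

theorem stepOn_apply_zero (hx : Monotone x) : stepOn x c n (x 0) = 0 :=
  stepOn_eq_zero_of_forall_notMem fun i _ ht => not_lt_of_ge (hx (Nat.zero_le i)) ht.1

theorem stepOn_apply_self (hx : Monotone x) : stepOn x c n (x n) = 0 :=
  stepOn_eq_zero_of_forall_notMem fun _ hi ht => not_lt_of_ge (hx (Nat.succ_le_of_lt hi)) ht.2

end StepFunction

section Grid

noncomputable def grid (K i : ℕ) : ℝ := i / K

variable {K i : ℕ} {t : ℝ}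

theorem grid_mono (K : ℕ) : Monotone (grid K) := fun _ _ h =>
  div_le_div_of_nonneg_right (Nat.cast_le.2 h) K.cast_nonneg

@[simp] theorem grid_zero (K : ℕ) : grid K 0 = 0 := by simp [grid]

theorem grid_self (hK : 0 < K) : grid K K = 1 := div_self (by positivity)

theorem grid_succ_sub (K i : ℕ) : grid K (i + 1) - grid K i = (K : ℝ)⁻¹ := by
  simp only [grid, Nat.cast_succ]
  ring

theorem Icc_grid_subset (hi : i < K) : Icc (grid K i) (grid K (i + 1)) ⊆ Icc 0 1 :=
  Icc_subset_Icc (grid_zero K ▸ grid_mono K (Nat.zero_le i))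
    (grid_self (Nat.zero_lt_of_lt hi) ▸ grid_mono K hi)

theorem exists_mem_Ioo_grid (hK : 0 < K) (ht : t ∈ Icc 0 1) (hnot : t ∉ grid K '' Iic K) :
    ∃ i < K, t ∈ Ioo (grid K i) (grid K (i + 1)) := by
  have hKpos : (0 : ℝ) < K := Nat.cast_pos.2 hK
  have htK : 0 ≤ t * K := mul_nonneg ht.1 hKpos.le
  have ht1 : t < 1 := ht.2.lt_of_ne fun h => hnot ⟨K, mem_Iic.2 le_rfl, h ▸ grid_self hK⟩
  have hfloor : ⌊t * K⌋₊ < K := (Nat.floor_lt htK).2 (by nlinarith)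
  refine ⟨⌊t * K⌋₊, hfloor, lt_of_le_of_ne ?_ fun h => hnot ⟨_, mem_Iic.2 hfloor.le, h⟩, ?_⟩
  · rw [grid, div_le_iff₀ hKpos]
    exact Nat.floor_le htK
  · rw [grid, lt_div_iff₀ hKpos, Nat.cast_succ]
    exact Nat.lt_floor_add_one _

theorem mem_floor_pair_of_mem_Icc_grid (hK : 0 < K) (ht : t ∈ Icc (grid K i) (grid K (i + 1))) :
    i ∈ ({⌊t * K⌋₊, ⌊t * K⌋₊ - 1} : Finset ℕ) := by
  have hKpos : (0 : ℝ) < K := Nat.cast_pos.2 hK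
  obtain ⟨h₁, h₂⟩ := ht
  simp only [grid, div_le_iff₀ hKpos, le_div_iff₀ hKpos, Nat.cast_succ] at h₁ h₂
  have hlow : i ≤ ⌊t * K⌋₊ := Nat.le_floor (by simpa using h₁)
  have hhigh : ⌊t * K⌋₊ ≤ i + 1 := Nat.floor_le_of_le (by push_cast; linarith)
  simp only [Finset.mem_insert, Finset.mem_singleton]
  omega

end Grid

section ExitCost

/-- The distance from `y` to the complement of `(m, M)`. -/
def exitCost (m M y : ℝ) : ℝ := max 0 (min (M - y) (y - m))

variable {m M m' M' y : ℝ}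

theorem exitCost_mono (hm : m' ≤ m) (hM : M ≤ M') : exitCost m M y ≤ exitCost m' M' y :=
  max_le_max le_rfl (min_le_min (by linarith) (by linarith))

theorem exitCost_sub_add_le {d : ℝ} (hd : 0 ≤ d) :
    exitCost (m - d) (M + d) y ≤ exitCost m M y + d := by
  unfold exitCost
  rw [← max_add_add_right, zero_add, ← min_add_add_right]
  exact max_le_max hd (min_le_min (by linarith) (by linarith))

theorem mem_Ioo_of_exitCost_pos (h : 0 < exitCost m M y) : y ∈ Ioo m M := by
  simp only [exitCost, lt_max_iff, lt_irrefl, false_or, lt_min_iff, sub_pos] at h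
  exact ⟨h.2, h.1⟩

theorem exitCost_le_sub (h : m ≤ M) : exitCost m M y ≤ M - m :=
  max_le (by linarith) (by linarith [min_le_left (M - y) (y - m), min_le_right (M - y) (y - m)])

theorem exists_abs_le_exitCost_add (m M y : ℝ) {η : ℝ} (hη : 0 < η) :
    ∃ c, |c| ≤ exitCost m M y + η ∧ y + c ∉ Icc m M := by
  unfold exitCost
  by_cases hy : y ∈ Icc m M
  · rcases le_total (M - y) (y - m) with h | h
    · refine ⟨M - y + η, ?_, fun hc => by linarith [hc.2]⟩
      rw [abs_of_nonneg (by linarith [hy.2]), min_eq_left h, max_eq_right (by linarith [hy.2])]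
    · refine ⟨m - y - η, ?_, fun hc => by linarith [hc.1]⟩
      rw [abs_of_nonpos (by linarith [hy.1]), min_eq_right h, max_eq_right (by linarith [hy.1])]
      linarith
  · exact ⟨0, by simpa using add_nonneg (le_max_left _ _) hη.le, by simpa using hy⟩

end ExitCost

section CrossingCost

noncomputable def cellInf (G : ℝ → ℝ) (K i : ℕ) : ℝ := sInf (G '' Icc (grid K i) (grid K (i + 1)))

noncomputable def cellSup (G : ℝ → ℝ) (K i : ℕ) : ℝ := sSup (G '' Icc (grid K i) (grid K (i + 1)))

noncomputable def crossingCost (G : ℝ → ℝ) (K : ℕ) (y : ℝ) : ℝ :=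
  ∑ i ∈ Finset.range K, exitCost (cellInf G K i) (cellSup G K i) y

variable {G H : ℝ → ℝ} {K i : ℕ}

theorem image_Icc_grid (hG : Continuous G) (K i : ℕ) :
    G '' Icc (grid K i) (grid K (i + 1)) = Icc (cellInf G K i) (cellSup G K i) :=
  hG.continuousOn.image_Icc (grid_mono K (Nat.le_succ i))

theorem cellInf_le_cellSup (hG : Continuous G) (K i : ℕ) : cellInf G K i ≤ cellSup G K i :=
  nonempty_Icc.1 <| image_Icc_grid hG K i ▸ (nonempty_Icc.2 (grid_mono K (Nat.le_succ i))).image G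

theorem crossingCost_le_add (hG : Continuous G) (hH : Continuous H) {d : ℝ}
    (h : ∀ t, |H t - G t| ≤ d) (y : ℝ) :
    crossingCost H K y ≤ crossingCost G K y + K * d := by
  have hd : 0 ≤ d := (abs_nonneg _).trans (h 0)
  have hcell : ∀ i, exitCost (cellInf H K i) (cellSup H K i) y ≤
      exitCost (cellInf G K i) (cellSup G K i) y + d := by
    intro i
    have hsub : Icc (cellInf H K i) (cellSup H K i) ⊆
        Icc (cellInf G K i - d) (cellSup G K i + d) := by
      rw [← image_Icc_grid hH]
      rintro _ ⟨t, ht, rfl⟩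
      have hGt := image_Icc_grid hG K i ▸ mem_image_of_mem G ht
      have := abs_le.1 (h t)
      exact ⟨by linarith [hGt.1], by linarith [hGt.2]⟩
    obtain ⟨hinf, hsup⟩ := (Icc_subset_Icc_iff (cellInf_le_cellSup hH K i)).1 hsub
    exact (exitCost_mono hinf hsup).trans (exitCost_sub_add_le hd)
  calc crossingCost H K y
      ≤ ∑ i ∈ Finset.range K, (exitCost (cellInf G K i) (cellSup G K i) y + d) :=
        Finset.sum_le_sum fun i _ => hcell i
    _ = crossingCost G K y + K * d := by
        rw [Finset.sum_add_distrib, Finset.sum_const, Finset.card_range, nsmul_eq_mul,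
          crossingCost]

end CrossingCost

theorem exists_eVariationOn_lt_of_two_mul_crossingCost_lt {G : ℝ → ℝ} (hG : Continuous G)
    {K : ℕ} (hK : 0 < K) {y δ : ℝ} (h : 2 * crossingCost G K y < δ) :
    ∃ f : ℝ → ℝ, f 0 = y ∧ f 1 = y ∧ eVariationOn f (Icc 0 1) < ENNReal.ofReal δ ∧
      {t ∈ Icc (0 : ℝ) 1 | f t = G t}.Finite := by
  have hKpos : (0 : ℝ) < K := Nat.cast_pos.2 hK
  set η := (δ - 2 * crossingCost G K y) / (4 * K) with hη_def
  have hη : 0 < η := div_pos (by linarith) (by positivity)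
  choose c hc_abs hc_out using
    fun i => exists_abs_le_exitCost_add (cellInf G K i) (cellSup G K i) y hη
  have hc_sum : ∑ i ∈ Finset.range K, |c i| ≤ crossingCost G K y + K * η := by
    calc ∑ i ∈ Finset.range K, |c i|
        ≤ ∑ i ∈ Finset.range K, (exitCost (cellInf G K i) (cellSup G K i) y + η) :=
          Finset.sum_le_sum fun i _ => hc_abs i
      _ = crossingCost G K y + K * η := by
          rw [Finset.sum_add_distrib, Finset.sum_const, Finset.card_range, nsmul_eq_mul,
            crossingCost]
  have hKη : K * η = (δ - 2 * crossingCost G K y) / 4 := by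
    rw [hη_def]; field_simp
  refine ⟨fun t => y + stepOn (grid K) c K t, ?_, ?_, ?_, ?_⟩
  · simpa using stepOn_apply_zero (c := c) (n := K) (grid_mono K)
  · simpa [grid_self hK] using stepOn_apply_self (c := c) (n := K) (grid_mono K)
  · calc eVariationOn (fun t => y + stepOn (grid K) c K t) (Icc 0 1)
        ≤ eVariationOn (fun _ => y) (Icc 0 1) + eVariationOn (stepOn (grid K) c K) (Icc 0 1) :=
          eVariationOn_add_le _ _ _
      _ ≤ ENNReal.ofReal (2 * ∑ i ∈ Finset.range K, |c i|) := by
          rw [eVariationOn_const, zero_add]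
          exact eVariationOn_stepOn_le _ _ _ _
      _ < ENNReal.ofReal δ :=
          (ENNReal.ofReal_lt_ofReal_iff_of_nonneg (by positivity)).2 (by linarith)
  · refine ((finite_Iic K).image (grid K)).subset fun t ⟨ht, hft⟩ => ?_
    by_contra hnot
    obtain ⟨i, hi, hti⟩ := exists_mem_Ioo_grid hK ht hnot
    refine hc_out i (image_Icc_grid hG K i ▸ ⟨t, Ioo_subset_Icc_self hti, ?_⟩)
    rw [← hft]
    exact congrArg (y + ·) (stepOn_apply_of_mem_Ioo (grid_mono K) hi hti)

section LevelSets

variable {G : ℝ → ℝ} {K : ℕ}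

theorem cellSup_sub_cellInf_le (hG : Continuous G) {i : ℕ} {δ ε : ℝ}
    (hG_unif : ∀ s ∈ Icc (0 : ℝ) 1, ∀ t ∈ Icc (0 : ℝ) 1, dist s t < δ → dist (G s) (G t) < ε)
    (hi : i < K) (hK : (K : ℝ)⁻¹ < δ) : cellSup G K i - cellInf G K i ≤ ε := by
  have hrange := image_Icc_grid hG K i
  have hle := cellInf_le_cellSup hG K i
  obtain ⟨s, hs, hGs⟩ : cellSup G K i ∈ G '' _ := hrange ▸ right_mem_Icc.2 hle
  obtain ⟨t, ht, hGt⟩ : cellInf G K i ∈ G '' _ := hrange ▸ left_mem_Icc.2 hle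
  have hst : dist s t < δ := (Real.dist_le_of_mem_Icc hs ht).trans_lt (grid_succ_sub K i ▸ hK)
  have := hG_unif s (Icc_grid_subset hi hs) t (Icc_grid_subset hi ht) hst
  rw [Real.dist_eq, hGs, hGt] at this
  exact (le_abs_self _).trans this.le

theorem card_filter_exitCost_pos_le (hG : Continuous G) (hK : 0 < K) {y : ℝ} {N : ℕ}
    (hN : {t ∈ Icc (0 : ℝ) 1 | G t = y}.encard ≤ N) :
    ((Finset.range K).filter fun i => 0 < exitCost (cellInf G K i) (cellSup G K i) y).card
      ≤ 2 * N := by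
  have hfin : {t ∈ Icc (0 : ℝ) 1 | G t = y}.Finite := finite_of_encard_le_coe hN
  have hZ : hfin.toFinset.card ≤ N := by
    rwa [← Nat.cast_le (α := ℕ∞), ← hfin.encard_eq_coe_toFinset_card]
  have hsub : ((Finset.range K).filter fun i => 0 < exitCost (cellInf G K i) (cellSup G K i) y)
      ⊆ hfin.toFinset.biUnion fun t => {⌊t * K⌋₊, ⌊t * K⌋₊ - 1} := by
    intro i hi
    rw [Finset.mem_filter, Finset.mem_range] at hi
    obtain ⟨t, ht, hGt⟩ : y ∈ G '' Icc (grid K i) (grid K (i + 1)) :=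
      image_Icc_grid hG K i ▸ Ioo_subset_Icc_self (mem_Ioo_of_exitCost_pos hi.2)
    exact Finset.mem_biUnion.2 ⟨t, hfin.mem_toFinset.2 ⟨Icc_grid_subset hi.1 ht, hGt⟩,
      mem_floor_pair_of_mem_Icc_grid hK ht⟩
  calc _ ≤ _ := Finset.card_le_card hsub
    _ ≤ hfin.toFinset.card * 2 :=
        Finset.card_biUnion_le_card_mul _ _ _ fun _ _ => Finset.card_le_two
    _ ≤ 2 * N := by omega

theorem exists_crossingCost_lt_of_encard_le (hG : Continuous G) {N : ℕ}
    (hN : ∀ y, {t ∈ Icc (0 : ℝ) 1 | G t = y}.encard ≤ N) {ε : ℝ} (hε : 0 < ε) :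
    ∃ K, 0 < K ∧ ∀ y, crossingCost G K y < ε := by
  set ε₀ := ε / (2 * N + 1) with hε₀_def
  have hε₀ : 0 < ε₀ := by positivity
  obtain ⟨δ, hδ, hG_unif⟩ := Metric.uniformContinuousOn_iff.1
    (isCompact_Icc.uniformContinuousOn_of_continuous hG.continuousOn) ε₀ hε₀
  obtain ⟨K, hK⟩ := exists_nat_gt δ⁻¹
  have hKpos : (0 : ℝ) < K := (inv_pos.2 hδ).trans hK
  refine ⟨K, Nat.cast_pos.1 hKpos, fun y => ?_⟩
  set S := (Finset.range K).filter fun i => 0 < exitCost (cellInf G K i) (cellSup G K i) y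
  have hS : (S.card : ℝ) ≤ 2 * N := by
    exact_mod_cast card_filter_exitCost_pos_le hG (Nat.cast_pos.1 hKpos) (hN y)
  calc crossingCost G K y = ∑ i ∈ S, exitCost (cellInf G K i) (cellSup G K i) y :=
        (Finset.sum_filter_of_ne fun _ _ h => (le_max_left _ _).lt_of_ne' h).symm
    _ ≤ ∑ _i ∈ S, ε₀ := Finset.sum_le_sum fun i hi =>
        (exitCost_le_sub (cellInf_le_cellSup hG K i)).trans <| cellSup_sub_cellInf_le hG hG_unif
          (Finset.mem_range.1 (Finset.mem_filter.1 hi).1) (inv_lt_of_inv_lt₀ hδ hK)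
    _ = S.card * ε₀ := by rw [Finset.sum_const, nsmul_eq_mul]
    _ ≤ 2 * N * ε₀ := by gcongr
    _ < ε := by
        rw [hε₀_def, mul_div_assoc', div_lt_iff₀ (by positivity)]
        linarith

section Polynomials

open Polynomial

theorem encard_setOf_eval_eq_le {p : ℝ[X]} (hp : 0 < p.natDegree) (s : Set ℝ) (y : ℝ) :
    {t ∈ s | p.eval t = y}.encard ≤ p.natDegree := by
  have hne : p - C y ≠ 0 := fun h => by
    rw [sub_eq_zero] at h
    rw [h, natDegree_C] at hp
    exact lt_irrefl 0 hp
  calc {t ∈ s | p.eval t = y}.encard ≤ ((p - C y).roots.toFinset : Set ℝ).encard :=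
        encard_le_encard fun t ht => by simp [hne, ht.2]
    _ = (p - C y).roots.toFinset.card := encard_coe_eq_coe_finsetCard _
    _ ≤ p.natDegree := by
        exact_mod_cast (Multiset.toFinset_card_le _).trans
          ((card_roots' _).trans natDegree_sub_C.le)

theorem dense_setOf_toContinuousMapOn_natDegree_pos :
    Dense {g : C(Icc (0 : ℝ) 1, ℝ) |
      ∃ p : ℝ[X], 0 < p.natDegree ∧ p.toContinuousMapOn (Icc 0 1) = g} := by
  refine Metric.dense_iff.2 fun g ε hε => ?_
  obtain ⟨p, hp⟩ := exists_polynomial_near_continuousMap 0 1 g (ε / 2) (half_pos hε)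
  set q := p + C (ε / 2) * X ^ (p.natDegree + 1)
  have hlead : (C (ε / 2) * X ^ (p.natDegree + 1)).natDegree = p.natDegree + 1 :=
    natDegree_C_mul_X_pow _ _ (half_pos hε).ne'
  have hq : q.natDegree = p.natDegree + 1 :=
    (natDegree_add_eq_right_of_natDegree_lt (by omega)).trans hlead
  have hqp : ‖q.toContinuousMapOn (Icc 0 1) - p.toContinuousMapOn (Icc 0 1)‖ ≤ ε / 2 := by
    refine (ContinuousMap.norm_le _ (half_pos hε).le).2 fun t => ?_
    have ht : |(t : ℝ) ^ (p.natDegree + 1)| ≤ 1 := by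
      rw [abs_of_nonneg (pow_nonneg t.2.1 _)]
      exact pow_le_one₀ t.2.1 t.2.2
    simpa [q, abs_mul, abs_of_pos hε] using
      mul_le_mul_of_nonneg_left ht (half_pos hε).le
  refine ⟨q.toContinuousMapOn (Icc 0 1), ?_, q, by omega, rfl⟩
  rw [Metric.mem_ball, dist_eq_norm]
  calc _ ≤ ‖q.toContinuousMapOn (Icc 0 1) - p.toContinuousMapOn (Icc 0 1)‖
        + ‖p.toContinuousMapOn (Icc 0 1) - g‖ := norm_sub_le_norm_sub_add_norm_sub _ _ _
    _ < ε / 2 + ε / 2 := add_lt_add_of_le_of_lt hqp hp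
    _ = ε := add_halves ε

end Polynomials

noncomputable def lowCrossingCostSet (ε : ℝ) : Set C(Icc (0 : ℝ) 1, ℝ) :=
  {g | ∃ K, 0 < K ∧ ∃ η < ε, ∀ y, crossingCost (IccExtend zero_le_one g) K y ≤ η}

theorem isOpen_lowCrossingCostSet (ε : ℝ) : IsOpen (lowCrossingCostSet ε) := by
  refine Metric.isOpen_iff.2 fun g ⟨K, hK, η, hηε, hη⟩ => ?_
  have hKpos : (0 : ℝ) < K := Nat.cast_pos.2 hK
  refine ⟨(ε - η) / (2 * K), div_pos (by linarith) (by positivity),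
    fun q hq => ⟨K, hK, (η + ε) / 2, by linarith, fun y => ?_⟩⟩
  have hdist : ∀ t, |IccExtend zero_le_one q t - IccExtend zero_le_one g t| ≤ dist q g :=
    fun t => by
      rw [← Real.dist_eq]
      exact ContinuousMap.dist_apply_le_dist _
  calc crossingCost (IccExtend zero_le_one q) K y
      ≤ crossingCost (IccExtend zero_le_one g) K y + K * dist q g :=
        crossingCost_le_add (continuous_IccExtend_iff.2 g.continuous)
          (continuous_IccExtend_iff.2 q.continuous) hdist y
    _ ≤ η + K * ((ε - η) / (2 * K)) := by
        gcongr
        exacts [hη y, (Metric.mem_ball.1 hq).le]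
    _ = (η + ε) / 2 := by field_simp; ring

theorem dense_lowCrossingCostSet {ε : ℝ} (hε : 0 < ε) : Dense (lowCrossingCostSet ε) := by
  refine dense_setOf_toContinuousMapOn_natDegree_pos.mono ?_
  rintro _ ⟨p, hp, rfl⟩
  have hlevel : ∀ y, {t ∈ Icc (0 : ℝ) 1 |
      IccExtend zero_le_one (p.toContinuousMapOn (Icc 0 1)) t = y}.encard ≤ p.natDegree := by
    intro y
    convert encard_setOf_eval_eq_le hp (Icc 0 1) y using 2
    refine Set.ext fun t => and_congr_right fun ht => ?_
    rw [IccExtend_of_mem _ _ ht]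
    rfl
  obtain ⟨K, hK, hcost⟩ := exists_crossingCost_lt_of_encard_le
    (continuous_IccExtend_iff.2 (ContinuousMap.continuous _)) hlevel (half_pos hε)
  exact ⟨K, hK, ε / 2, half_lt_self hε, fun y => (hcost y).le⟩

theorem permeableGraphCM_of_forall_mem_lowCrossingCostSet {g : C(Icc (0 : ℝ) 1, ℝ)}
    (hg : ∀ n : ℕ, g ∈ lowCrossingCostSet (1 / (n + 1))) : PermeableGraphCM g := by
  intro y δ hδ
  obtain ⟨n, hn⟩ := exists_nat_one_div_lt (half_pos hδ)
  obtain ⟨K, hK, η, hηn, hη⟩ := hg n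
  obtain ⟨f, hf0, hf1, hvar, hfin⟩ := exists_eVariationOn_lt_of_two_mul_crossingCost_lt
    (continuous_IccExtend_iff.2 g.continuous) hK (y := y) (δ := δ) (by linarith [hη y])
  have hcoinc : {t : ℝ | ∃ h : t ∈ Icc (0 : ℝ) 1, f t = g ⟨t, h⟩}.Finite :=
    hfin.subset fun t ⟨ht, hft⟩ => ⟨ht, by rwa [IccExtend_of_mem _ _ ht]⟩
  refine ⟨f, hf0, hf1, hvar, ?_⟩
  rw [hcoinc.isClosed.closure_eq]
  exact hcoinc.countable

/-- The set of continuous functions on `[0,1]` with permeable graph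
contains a dense `Gδ` subset of `C[0,1]`. -/
theorem typical_continuous_function_permeable_graph :
    ∃ 𝒢 : Set C(Set.Icc (0:ℝ) 1, ℝ), Dense 𝒢 ∧ IsGδ 𝒢 ∧
      ∀ g ∈ 𝒢, PermeableGraphCM g :=
  ⟨⋂ n : ℕ, lowCrossingCostSet (1 / (n + 1)),
    dense_iInter_of_isOpen (fun _ => isOpen_lowCrossingCostSet _)
      (fun _ => dense_lowCrossingCostSet Nat.one_div_pos_of_nat),
    IsGδ.iInter_of_isOpen fun _ => isOpen_lowCrossingCostSet _,
    fun _ hg => permeableGraphCM_of_forall_mem_lowCrossingCostSet (mem_iInter.1 hg)⟩
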